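/- Let r ≥ 0, m ≥ 1, n ≥ 1 be integers and let a_1, a_2, … be complex numbers. Then Σ_{1 ≤ k_m < ⋯ < k_1 ≤ n} a_{k_1+r} a_{k_2+r} ⋯ a_{k_m+r} = Σ_{i+j=m, i,j ≥ 0} (−1)^i · A_i(r) · Ā_j(n+r), where Ā_q(N) = Σ_{1 ≤ k_q < ⋯ < k_1 ≤ N} a_{k_1}⋯a_{k_q} and A_q(N) = Σ_{1 ≤ k_q ≤ ⋯ ≤ k_1 ≤ N} a_{k_1}⋯a_{k_q}. -/

import Mathlib

/-! The strict sums are the coefficients of `Ā_N(t) = ∏_{k ≤ N} (1 + a_k t)` and the weak ones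
those of `∏_{k ≤ r} (1 - a_k t)⁻¹`, so `∑_i (-1)^i A_i(r) t^i = Ā_r(t)⁻¹`. The left-hand side is
the coefficient of `t^m` in `∏_{r < k ≤ n + r} (1 + a_k t) = Ā_{n+r}(t) Ā_r(t)⁻¹`. -/

open Finset

/-- Multiple harmonic number `ζ_n({1}_m)`:
`ζ_n({1}_m) = ∑_{n ≥ n₁ > n₂ > ⋯ > n_m ≥ 1} 1/(n₁ ⋯ n_m)`, with `ζ_n({1}_0) = 1`. -/
noncomputable def mhn : ℕ → ℕ → ℝ
  | _, 0 => 1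
  | n, m + 1 => ∑ k ∈ Finset.Icc 1 n, mhn (k - 1) m / (k : ℝ)

/-- Multiple harmonic star number `ζ_n^⋆({1}_m)`:
`ζ_n^⋆({1}_m) = ∑_{n ≥ n₁ ≥ n₂ ≥ ⋯ ≥ n_m ≥ 1} 1/(n₁ ⋯ n_m)`, with `ζ_n^⋆({1}_0) = 1`. -/
noncomputable def mhsn : ℕ → ℕ → ℝ
  | _, 0 => 1
  | n, m + 1 => ∑ k ∈ Finset.Icc 1 n, mhsn k m / (k : ℝ)

/-- Multiple harmonic number with repeated real argument `p`: `ζ_n({p}_m)`. -/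
noncomputable def mhnP (p : ℝ) : ℕ → ℕ → ℝ
  | _, 0 => 1
  | n, m + 1 => ∑ k ∈ Finset.Icc 1 n, mhnP p (k - 1) m / (k : ℝ) ^ p

/-- Multiple harmonic star number with repeated real argument `p`: `ζ_n^⋆({p}_m)`. -/
noncomputable def mhsnP (p : ℝ) : ℕ → ℕ → ℝ
  | _, 0 => 1
  | n, m + 1 => ∑ k ∈ Finset.Icc 1 n, mhsnP p k m / (k : ℝ) ^ p

/-- Generalized harmonic number `H_n^{(p)} = ∑_{j=1}^n 1/j^p`. -/
noncomputable def genH (p n : ℕ) : ℝ := ∑ j ∈ Finset.Icc 1 n, 1 / (j : ℝ) ^ p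

/-- Auxiliary: `hypAux m n k = h_n^{(m+1)}(k)` for `k ≥ 1` (peel off the weak outer indices). -/
noncomputable def hypAux : ℕ → ℕ → ℕ → ℝ
  | 0, n, k => mhn n k
  | m + 1, n, k => ∑ j ∈ Finset.Icc 1 n, hypAux m j k

/-- Generalized hyperharmonic number `h_n^{(m)}(k)`, with the convention
`h_n^{(m)}(0) = C(m+n-1, m-1)`. -/
noncomputable def gh (n m k : ℕ) : ℝ :=
  if k = 0 then (Nat.choose (m + n - 1) (m - 1) : ℝ) else hypAux (m - 1) n k

/-- Unsigned Stirling number of the first kind, defined by the standard recurrence,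
equivalently by `x(x+1)⋯(x+n-1) = ∑_{k=0}^n [n; k] xᵏ`. -/
def stir1 : ℕ → ℕ → ℕ
  | 0, 0 => 1
  | 0, _ + 1 => 0
  | _ + 1, 0 => 0
  | n + 1, k + 1 => stir1 n k + n * stir1 n (k + 1)

/-- Multiple zeta value `ζ(p, {1}_m)`. -/
noncomputable def mzv (p m : ℕ) : ℝ := ∑' n : ℕ, mhn n m / (n + 1 : ℝ) ^ p

/-- Multiple zeta star value `ζ^⋆(p, {1}_m)`. -/
noncomputable def mzvStar (p m : ℕ) : ℝ := ∑' n : ℕ, mhsn (n + 1) m / (n + 1 : ℝ) ^ p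

/-- Riemann zeta value `ζ(p) = ∑_{n=1}^∞ 1/n^p`. -/
noncomputable def rz (p : ℕ) : ℝ := ∑' n : ℕ, 1 / (n + 1 : ℝ) ^ p

/-- `U_{m,r}(p) = ∑_{n=1}^∞ ζ_{n+r}({1}_m)/n^p`. -/
noncomputable def Usum (m r p : ℕ) : ℝ := ∑' n : ℕ, mhn (n + 1 + r) m / (n + 1 : ℝ) ^ p

/-- Strictly decreasing `q`-fold sum `Ā_q(n) = ∑_{1 ≤ k_q < ⋯ < k₁ ≤ n} a_{k₁}⋯a_{k_q}`,
with `Ā_0(n) = 1` (so `Ā_q(n) = 0` when `n < q`). -/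
def sdSum {R : Type*} [Semiring R] (a : ℕ → R) : ℕ → ℕ → R
  | _, 0 => 1
  | n, q + 1 => ∑ k ∈ Finset.Icc 1 n, a k * sdSum a (k - 1) q

/-- Weakly decreasing `q`-fold sum `A_q(n) = ∑_{1 ≤ k_q ≤ ⋯ ≤ k₁ ≤ n} a_{k₁}⋯a_{k_q}`,
with `A_0(n) = 1`. -/
def wdSum {R : Type*} [Semiring R] (a : ℕ → R) : ℕ → ℕ → R
  | _, 0 => 1
  | n, q + 1 => ∑ k ∈ Finset.Icc 1 n, a k * wdSum a k q

open PowerSeries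

section

variable {R : Type*}

theorem sdSum_succ_succ [Semiring R] (a : ℕ → R) (n q : ℕ) :
    sdSum a (n + 1) (q + 1) = sdSum a n (q + 1) + a (n + 1) * sdSum a n q := by
  simp only [sdSum, Finset.sum_Icc_succ_top (Nat.le_add_left 1 n), Nat.add_sub_cancel]

theorem wdSum_succ_succ [Semiring R] (a : ℕ → R) (n q : ℕ) :
    wdSum a (n + 1) (q + 1) = wdSum a n (q + 1) + a (n + 1) * wdSum a (n + 1) q := by
  simp only [wdSum, Finset.sum_Icc_succ_top (Nat.le_add_left 1 n)]

theorem mk_sdSum_zero [Semiring R] (a : ℕ → R) : PowerSeries.mk (sdSum a 0) = 1 := by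
  ext (_ | q) <;> simp [sdSum]

theorem mk_sdSum_succ [Semiring R] (a : ℕ → R) (n : ℕ) :
    PowerSeries.mk (sdSum a (n + 1)) = (1 + C (a (n + 1)) * X) * PowerSeries.mk (sdSum a n) := by
  ext (_ | q)
  · simp [sdSum]
  · simp [add_mul, mul_assoc, coeff_succ_X_mul, sdSum_succ_succ]

theorem mk_sdSum_shift_mul [Semiring R] (a : ℕ → R) (r n : ℕ) :
    PowerSeries.mk (sdSum (fun k => a (k + r)) n) * PowerSeries.mk (sdSum a r) =
      PowerSeries.mk (sdSum a (n + r)) := by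
  induction n with
  | zero => rw [mk_sdSum_zero, one_mul, zero_add]
  | succ n ih =>
    rw [mk_sdSum_succ, mul_assoc, ih, Nat.add_right_comm, mk_sdSum_succ, Nat.add_right_comm]

theorem one_add_C_mul_X_mul_mk_wdSum_succ [CommRing R] (a : ℕ → R) (r : ℕ) :
    (1 + C (a (r + 1)) * X) * PowerSeries.mk (fun i => (-1) ^ i * wdSum a (r + 1) i) =
      PowerSeries.mk (fun i => (-1) ^ i * wdSum a r i) := by
  ext (_ | q)
  · simp [wdSum]
  · simp only [add_mul, one_mul, mul_assoc, map_add, coeff_C_mul, coeff_succ_X_mul, coeff_mk,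
      wdSum_succ_succ]
    ring

theorem mk_wdSum_mul_mk_sdSum [CommRing R] (a : ℕ → R) (r : ℕ) :
    PowerSeries.mk (fun i => (-1) ^ i * wdSum a r i) * PowerSeries.mk (sdSum a r) = 1 := by
  induction r with
  | zero =>
    rw [mk_sdSum_zero, mul_one]
    ext (_ | q) <;> simp [wdSum]
  | succ r ih =>
    rw [mk_sdSum_succ, mul_left_comm, ← mul_assoc, one_add_C_mul_X_mul_mk_wdSum_succ, ih]

end

theorem shifted_sdSum_eq_general (r m n : ℕ) (a : ℕ → ℂ) :
    sdSum (fun k => a (k + r)) n m =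
      ∑ i ∈ Finset.range (m + 1), (-1 : ℂ) ^ i * wdSum a r i * sdSum a (n + r) (m - i) := by
  set V : ℂ⟦X⟧ := PowerSeries.mk fun i => (-1) ^ i * wdSum a r i
  set S : ℕ → ℂ⟦X⟧ := fun N => PowerSeries.mk (sdSum a N)
  calc sdSum (fun k => a (k + r)) n m
      = coeff m (PowerSeries.mk (sdSum (fun k => a (k + r)) n) * (S r * V)) := by
        rw [mul_comm _ V, mk_wdSum_mul_mk_sdSum, mul_one, coeff_mk]
    _ = coeff m (V * S (n + r)) := by
        rw [← mul_assoc, mk_sdSum_shift_mul, mul_comm]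
    _ = _ := by
        rw [coeff_mul,
          Finset.Nat.sum_antidiagonal_eq_sum_range_succ (fun i j => coeff i V * coeff j _)]
        simp only [V, S, coeff_mk]

/-- Remark 2.1, strict version: for `r ≥ 0`, `m, n ≥ 1`,
`∑_{1 ≤ k_m < ⋯ < k₁ ≤ n} a_{k₁+r}⋯a_{k_m+r} = ∑_{i+j=m} (-1)^i A_i(r) Ā_j(n+r)`. -/
theorem shifted_sdSum_eq (r m n : ℕ) (hm : 1 ≤ m) (hn : 1 ≤ n) (a : ℕ → ℂ) :
    sdSum (fun k => a (k + r)) n m =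
      ∑ i ∈ Finset.range (m + 1), (-1 : ℂ) ^ i * wdSum a r i * sdSum a (n + r) (m - i) :=
  shifted_sdSum_eq_general r m n a
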